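/- Let f : ℝ → ℂ be defined by f(x) = Σ_{k=1}^∞ 2^{−k} e^{2πi 2^k x}. Then f is not Lipschitz: there is no constant C such that |f(x+y) − f(x)| ≤ C|y| for all x, y ∈ ℝ. -/

import Mathlib

/-!
The imaginary part of `f(y) - f(0)` is `∑ 2⁻ᵏ sin (2π 2ᵏ y)`. At `y = 2⁻ᵐ` every term is
nonnegative (its phase is at most `π` or a multiple of `2π`), and the `m - 2` terms with `2ᵏ y ≤ 1/4` are each at least `4 y` by Jordan's inequality
`sin θ ≥ 2θ/π`. Hence `‖f(y) - f(0)‖ ≥ 4 (m - 2) y`, and the difference quotient is unbounded.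
-/

/-- The lacunary series `f(x) = Σ_{k=1}^∞ 2^{−k} e^{2πi 2^k x}`. -/
noncomputable def lacunary (x : ℝ) : ℂ :=
  ∑' k : ℕ, ((1 : ℂ) / 2) ^ (k + 1) *
    Complex.exp (2 * Real.pi * Complex.I * (2 : ℂ) ^ (k + 1) * x)

open Real

lemma sin_two_pi_mul_two_zpow_nonneg (j : ℤ) : 0 ≤ sin (2 * π * 2 ^ j) := by
  rcases le_or_gt 0 j with hj | hj
  · lift j to ℕ using hj
    have : 2 * π * (2 : ℝ) ^ (j : ℤ) = ((2 * 2 ^ j : ℕ) : ℝ) * π := by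
      rw [zpow_natCast]; push_cast; ring
    rw [this, sin_nat_mul_pi]
  · have : (2 : ℝ) ^ j ≤ 2 ^ (-1 : ℤ) := zpow_le_zpow_right₀ one_le_two (by omega)
    refine sin_nonneg_of_nonneg_of_le_pi (by positivity) ?_
    norm_num at this
    nlinarith [pi_pos]

lemma four_mul_two_zpow_le_sin {j : ℤ} (hj : j ≤ -2) : 4 * 2 ^ j ≤ sin (2 * π * 2 ^ j) := by
  have hj' : (2 : ℝ) ^ j ≤ 2 ^ (-2 : ℤ) := zpow_le_zpow_right₀ one_le_two hj
  norm_num at hj'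
  have := mul_le_sin (x := 2 * π * 2 ^ j) (by positivity) (by nlinarith [pi_pos])
  calc 4 * (2 : ℝ) ^ j = 2 / π * (2 * π * 2 ^ j) := by field_simp; ring
    _ ≤ _ := this

lemma lacunary_term_eq (k : ℕ) (x : ℝ) :
    ((1 : ℂ) / 2) ^ (k + 1) * Complex.exp (2 * π * Complex.I * (2 : ℂ) ^ (k + 1) * x) =
      ((1 / 2 : ℝ) ^ (k + 1) : ℝ) * Complex.exp ((2 * π * 2 ^ (k + 1) * x : ℝ) * Complex.I) := by
  push_cast
  ring_nf

lemma hasSum_lacunary_im (x : ℝ) :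
    HasSum (fun k : ℕ ↦ (1 / 2 : ℝ) ^ (k + 1) * sin (2 * π * 2 ^ (k + 1) * x)) (lacunary x).im := by
  have hsum : Summable fun k : ℕ ↦
      ((1 : ℂ) / 2) ^ (k + 1) * Complex.exp (2 * π * Complex.I * (2 : ℂ) ^ (k + 1) * x) := by
    refine Summable.of_norm ?_
    simp_rw [lacunary_term_eq, norm_mul, Complex.norm_exp_ofReal_mul_I, mul_one, Complex.norm_real,
      norm_of_nonneg (by positivity : (0 : ℝ) ≤ (1 / 2) ^ _)]
    exact (summable_nat_add_iff 1).mpr summable_geometric_two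
  refine (Complex.hasSum_im hsum.hasSum).congr_fun fun k ↦ ?_
  rw [lacunary_term_eq, Complex.im_ofReal_mul, Complex.exp_ofReal_mul_I_im]

lemma lacunary_zero_im : (lacunary 0).im = 0 :=
  (hasSum_lacunary_im 0).unique (by simp)

lemma le_lacunary_im_two_zpow (n : ℕ) :
    4 * n * (2 : ℝ) ^ (-(n + 2 : ℤ)) ≤ (lacunary (2 ^ (-(n + 2 : ℤ)))).im := by
  have harg (k : ℕ) : 2 * π * 2 ^ (k + 1) * (2 : ℝ) ^ (-(n + 2 : ℤ)) =
      2 * π * 2 ^ ((k + 1 : ℤ) - (n + 2)) := by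
    rw [sub_eq_add_neg, zpow_add₀ two_ne_zero]; norm_cast
    ring
  refine le_trans ?_ (sum_le_hasSum (Finset.range n) (fun k _ ↦ ?_) (hasSum_lacunary_im _))
  · calc 4 * n * (2 : ℝ) ^ (-(n + 2 : ℤ))
          = ∑ k ∈ Finset.range n, 4 * (2 : ℝ) ^ (-(n + 2 : ℤ)) := by
            rw [Finset.sum_const, Finset.card_range, nsmul_eq_mul]; ring
      _ ≤ _ := Finset.sum_le_sum fun k hk ↦ ?_
    rw [harg]
    calc 4 * (2 : ℝ) ^ (-(n + 2 : ℤ))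
        = (1 / 2) ^ (k + 1) * (4 * 2 ^ ((k + 1 : ℤ) - (n + 2))) := by
          rw [one_div, inv_pow, ← zpow_natCast, ← zpow_neg, mul_left_comm,
            ← zpow_add₀ two_ne_zero]
          push_cast
          ring_nf
      _ ≤ _ := by
        gcongr
        exact four_mul_two_zpow_le_sin (by simp at hk; omega)
  · rw [harg]
    exact mul_nonneg (by positivity) (sin_two_pi_mul_two_zpow_nonneg _)

theorem stmt_18 :
    ¬ ∃ C : ℝ, ∀ x y : ℝ, ‖lacunary (x + y) - lacunary x‖ ≤ C * |y| := by
  rintro ⟨C, hC⟩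
  obtain ⟨n, hn⟩ := exists_nat_gt C
  have hy : (0 : ℝ) < 2 ^ (-(n + 2 : ℤ)) := by positivity
  have hbound := (le_lacunary_im_two_zpow n).trans <| calc
    (lacunary (2 ^ (-(n + 2 : ℤ)))).im = (lacunary (0 + 2 ^ (-(n + 2 : ℤ))) - lacunary 0).im := by
      rw [Complex.sub_im, lacunary_zero_im, sub_zero, zero_add]
    _ ≤ _ := Complex.im_le_norm _
    _ ≤ C * 2 ^ (-(n + 2 : ℤ)) := by simpa [abs_of_pos hy] using hC 0 (2 ^ (-(n + 2 : ℤ)))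
  nlinarith [hbound, n.cast_nonneg (α := ℝ)]
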